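/- arXiv:1412.3309 — 3 statements merged into one kernel-verified Lean document; each statement's English description precedes it below -/
import Mathlib

section
/- Let n be a positive integer and set s = μ(n). Then n − s is a nonnegative even integer, and if n > s then μ((n − s)/2) ≤ s. -/
/-! If `n` is a sum of `s = μ(n)` terms `2^dᵢ - 1`, then `n - s = 2 ∑ (2^(dᵢ-1) - 1)`, and the
right-hand sum has at most `s` nonzero terms, each again of the form `2^d - 1` with `d > 0`. -/

/-- `μ(n)`: the smallest `r` such that `n` can be written as a sum of `r` numbers
of the form `2^d - 1` with `d > 0`. -/
noncomputable def muNat (n : ℕ) : ℕ :=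
  sInf {r : ℕ | ∃ d : Fin r → ℕ, (∀ i, 0 < d i) ∧ n = ∑ i, (2 ^ d i - 1)}

open Finset

theorem muNat_sum_le_of_pos {r : ℕ} (d : Fin r → ℕ) (hd : ∀ i, 0 < d i) :
    muNat (∑ i, (2 ^ d i - 1)) ≤ r :=
  Nat.sInf_le ⟨d, hd, rfl⟩

theorem muNat_le_self (n : ℕ) : muNat n ≤ n := by
  simpa using muNat_sum_le_of_pos (fun _ : Fin n => 1) fun _ => one_pos

theorem exists_sum_eq_of_muNat (n : ℕ) :
    ∃ d : Fin (muNat n) → ℕ, (∀ i, 0 < d i) ∧ n = ∑ i, (2 ^ d i - 1) :=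
  Nat.sInf_mem (s := {r | ∃ d : Fin r → ℕ, (∀ i, 0 < d i) ∧ n = ∑ i, (2 ^ d i - 1)})
    ⟨n, fun _ => 1, fun _ => one_pos, by simp⟩

/-- Terms with `d i = 0` vanish, so they can be discarded. -/
theorem muNat_sum_le {r : ℕ} (d : Fin r → ℕ) : muNat (∑ i, (2 ^ d i - 1)) ≤ r := by
  set S := univ.filter fun i => 0 < d i
  let e := Fintype.equivFin S
  have hsum : ∑ i, (2 ^ d i - 1) = ∑ j, (2 ^ d (e.symm j) - 1) := by
    rw [Equiv.sum_comp e.symm (fun i : S => 2 ^ d i - 1), sum_coe_sort S (fun i => 2 ^ d i - 1),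
      sum_filter_of_ne]
    intro i _ hi
    exact Nat.pos_of_ne_zero fun h => hi (by simp [h])
  calc muNat (∑ i, (2 ^ d i - 1)) ≤ Fintype.card S := by
        rw [hsum]
        exact muNat_sum_le_of_pos _ fun j => (mem_filter.mp (e.symm j).2).2
    _ ≤ r := by
        simpa only [Fintype.card_coe] using (card_filter_le univ _).trans (card_fin r).le

theorem two_pow_sub_one_eq {d : ℕ} (hd : 0 < d) : 2 ^ d - 1 = 2 * (2 ^ (d - 1) - 1) + 1 := by
  obtain ⟨k, rfl⟩ := Nat.exists_eq_succ_of_ne_zero hd.ne'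
  have := Nat.one_le_two_pow (n := k)
  rw [Nat.succ_sub_one, pow_succ]
  omega

theorem stmt1_general (n : ℕ) :
    muNat n ≤ n ∧ Even (n - muNat n) ∧
      (muNat n < n → muNat ((n - muNat n) / 2) ≤ muNat n) := by
  obtain ⟨d, hd, hn⟩ := exists_sum_eq_of_muNat n
  set m := ∑ i, (2 ^ (d i - 1) - 1)
  have hnm : n = 2 * m + muNat n :=
    calc n = ∑ i, (2 * (2 ^ (d i - 1) - 1) + 1) :=
          hn.trans (sum_congr rfl fun i _ => two_pow_sub_one_eq (hd i))
      _ = 2 * m + muNat n := by simp [m, sum_add_distrib, mul_sum]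
  refine ⟨muNat_le_self n, ⟨m, by omega⟩, fun _ => ?_⟩
  rw [show (n - muNat n) / 2 = m by omega]
  exact muNat_sum_le _

/-- For a positive integer `n` with `s = μ(n)`, the number `n - s` is a nonnegative even
integer, and if `n > s` then `μ((n - s)/2) ≤ s`. -/
theorem stmt1 (n : ℕ) (hn : 0 < n) :
    muNat n ≤ n ∧ Even (n - muNat n) ∧
      (muNat n < n → muNat ((n - muNat n) / 2) ≤ muNat n) :=
  stmt1_general n
end

section
/- Let k ≥ 3, let d_1 > d_2 > … > d_{k−2} ≥ d_{k−1} > 0 be integers, and set n = Σ_{i=1}^{k−1}(2^{d_i} − 1). If x is a monomial of degree n in P_k that is not hit, then ω_i(x) = k − 1 for every i with 1 ≤ i ≤ d_{k−1}. -/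
/-!
Write the monomial as `x = X_S · y²`, where `S` is the set of variables with odd exponent, so that
`ω₁(x) = #S` and `ω_{i+1}(x) = ω_i(y)`. Let `α = bitWeight` be the binary digit sum. Two facts
about hit polynomials drive an induction on `i`. First, `X_S · w²` is hit when `#S < α(#S + deg w)`:
by the χ-trick `X_S · w² = X_S · Sq^{deg w}(w) ≡ χ(Sq^{deg w})(X_S) · w`, and every monomial of
`χ(Sq)(X_S) = ∏_{j ∈ S} (X_j + X_j² + X_j⁴ + ⋯)` has degree a sum of `#S` powers of two.
Second (of Kameko type), if `y` is hit then so is `X_S · y²`, provided `s < α(deg x + s)` for all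
`s + 2 ≤ #S`. For `n = Σ (2^{d_i} - 1)` this digit-sum bound holds for every `s ≤ k - 3`, because
`n + s = Σ 2^{d_i} - (k - 1 - s)` and at most one carry occurs (when `d_{k-2} = d_{k-1}`). With a
parity count this forces `#S = k - 1`, and passing from `x` to `y` replaces each `d_i` by `d_i - 1`.
-/

open MvPolynomial

/-- The total Steenrod square on `P_k = F_2[x_1,…,x_k]`, the algebra map with
`Sq(x_j) = x_j + x_j^2`. -/
noncomputable def SqTotal (k : ℕ) :
    MvPolynomial (Fin k) (ZMod 2) →ₐ[ZMod 2] MvPolynomial (Fin k) (ZMod 2) :=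
  aeval fun j => X j + X j ^ 2

/-- The Steenrod square `Sq^i : P_k → P_k`, sending a homogeneous polynomial `f` of
degree `d` to the degree-`d + i` homogeneous component of `Sq(f)`, extended additively. -/
noncomputable def SqOp (k i : ℕ) (f : MvPolynomial (Fin k) (ZMod 2)) :
    MvPolynomial (Fin k) (ZMod 2) :=
  ∑ d ∈ Finset.range (f.totalDegree + 1),
    homogeneousComponent (d + i) (SqTotal k (homogeneousComponent d f))

/-- The space of hit polynomials: finite sums of `Sq^i (f_i)` with `i > 0`. -/
noncomputable def hitSubmodule (k : ℕ) :
    Submodule (ZMod 2) (MvPolynomial (Fin k) (ZMod 2)) :=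
  Submodule.span (ZMod 2) {g | ∃ i f, 0 < i ∧ g = SqOp k i f}

/-- A polynomial is hit if it is a finite sum of `Sq^i (f_i)` with `i > 0`. -/
def IsHit (k : ℕ) (f : MvPolynomial (Fin k) (ZMod 2)) : Prop := f ∈ hitSubmodule k

/-- `(QP_k)_n`: the space of homogeneous polynomials of degree `n` modulo hit polynomials. -/
abbrev QP (k n : ℕ) :=
  ↥(homogeneousSubmodule (Fin k) (ZMod 2) n) ⧸
    ((hitSubmodule k).comap (homogeneousSubmodule (Fin k) (ZMod 2) n).subtype)

/-- `ω_{i+1}(x)` for the monomial with exponent vector `a`: the number of variables whose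
exponent has `i`-th binary digit equal to `1`. -/
def wvec (k : ℕ) (a : Fin k →₀ ℕ) (i : ℕ) : ℕ :=
  (Finset.univ.filter fun j : Fin k => Nat.testBit (a j) i).card

/-- Left lexicographic strict order on weight vectors. -/
def wlt (u v : ℕ → ℕ) : Prop := ∃ i, (∀ j, j < i → u j = v j) ∧ u i < v i

open Finset

def bitWeight (n : ℕ) : ℕ := (Nat.digits 2 n).sum

lemma bitWeight_pos {n : ℕ} (hn : n ≠ 0) : 0 < bitWeight n :=
  (Nat.pos_of_ne_zero (Nat.getLast_digit_ne_zero 2 hn)).trans_le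
    (List.le_sum_of_mem (List.getLast_mem _))

lemma bitWeight_two_pow_mul_add {e b : ℕ} (m : ℕ) (hb : b < 2 ^ e) :
    bitWeight (2 ^ e * m + b) = bitWeight m + bitWeight b := by
  rcases Nat.eq_zero_or_pos m with rfl | hm
  · simp [bitWeight]
  have hlen := (Nat.digits_length_le_iff one_lt_two b).mpr hb
  have := Nat.digits_append_zeroes_append_digits (k := e - (Nat.digits 2 b).length) (n := b)
    one_lt_two hm
  rw [Nat.add_sub_cancel' hlen] at this
  rw [bitWeight, bitWeight, bitWeight, add_comm, ← this]
  simp [add_comm]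

lemma bitWeight_two_pow_mul (e m : ℕ) : bitWeight (2 ^ e * m) = bitWeight m := by
  simpa [bitWeight] using bitWeight_two_pow_mul_add m (Nat.two_pow_pos e)

lemma bitWeight_two_mul (m : ℕ) : bitWeight (2 * m) = bitWeight m := by
  simpa using bitWeight_two_pow_mul 1 m

lemma bitWeight_two_pow (e : ℕ) : bitWeight (2 ^ e) = 1 := by
  simpa [bitWeight] using bitWeight_two_pow_mul e 1

lemma padicValNat_two_factorial (n : ℕ) : padicValNat 2 n.factorial = n - bitWeight n := by
  simpa [bitWeight] using sub_one_mul_padicValNat_factorial (p := 2) n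

lemma bitWeight_le (n : ℕ) : bitWeight n ≤ n := Nat.digit_sum_le 2 n

lemma bitWeight_lt_self {n : ℕ} (hn : 2 ≤ n) : bitWeight n < n := by
  have h := (padicValNat_dvd_iff_le (p := 2) (n := 1) (Nat.factorial_ne_zero n)).mp
    (by simpa using Nat.dvd_factorial two_pos hn)
  rw [padicValNat_two_factorial] at h
  have := bitWeight_le n
  omega

/-- `a! b! ∣ (a + b)!` together with Legendre's formula `v₂(n!) = n - α(n)`. -/
lemma bitWeight_add_le (a b : ℕ) : bitWeight (a + b) ≤ bitWeight a + bitWeight b := by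
  have h := (padicValNat_dvd_iff_le (p := 2) (Nat.factorial_ne_zero _)).mp
    (pow_padicValNat_dvd.trans (Nat.factorial_mul_factorial_dvd_factorial_add a b))
  rw [padicValNat.mul (Nat.factorial_ne_zero _) (Nat.factorial_ne_zero _),
    padicValNat_two_factorial, padicValNat_two_factorial, padicValNat_two_factorial] at h
  have := bitWeight_le a
  have := bitWeight_le b
  have := bitWeight_le (a + b)
  omega

lemma bitWeight_add_one_le_bitWeight_sub_add {N t : ℕ} (hN : Even N) (ht : 1 ≤ t) (htN : t ≤ N) :
    bitWeight N + 1 ≤ bitWeight (N - t) + t := by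
  rcases (show t = 1 ∨ 2 ≤ t by omega) with rfl | ht2
  · obtain ⟨M, rfl⟩ := hN
    have h := bitWeight_add_le (M - 1) 1
    rw [show M + M - 1 = 2 ^ 1 * (M - 1) + 1 by omega, bitWeight_two_pow_mul_add _ one_lt_two,
      ← two_mul, bitWeight_two_mul]
    rw [Nat.sub_add_cancel (by omega)] at h
    omega
  · have h := bitWeight_add_le (N - t) t
    rw [Nat.sub_add_cancel htN] at h
    have := bitWeight_lt_self ht2
    omega

/-- Subtracting `t` from `2 ^ e + Q` with `2 ^ e ∣ Q`: either the block `2 ^ e` absorbs `t`,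
leaving a nonzero low part, or it is used up and the evenness of `Q` takes over. -/
lemma bitWeight_add_two_le_bitWeight_two_pow_add_sub {e Q t : ℕ} (he : e ≠ 0) (hdvd : 2 ^ e ∣ Q)
    (ht : 1 ≤ t) (htQ : t ≤ 2 ^ e + Q) : bitWeight Q + 2 ≤ bitWeight (2 ^ e + Q - t) + t := by
  have he2 : 2 ≤ 2 ^ e := Nat.le_self_pow he 2
  obtain ⟨M, rfl⟩ := hdvd
  rcases lt_trichotomy t (2 ^ e) with hlt | rfl | hgt
  · rw [show 2 ^ e + 2 ^ e * M - t = 2 ^ e * M + (2 ^ e - t) by omega,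
      bitWeight_two_pow_mul_add M (by omega), bitWeight_two_pow_mul]
    have := bitWeight_pos (n := 2 ^ e - t) (by omega)
    omega
  · rw [Nat.add_sub_cancel_left]
    omega
  · have hQ : Even (2 ^ e * M) := (Nat.even_pow.mpr ⟨even_two, he⟩).mul_right M
    have := bitWeight_add_one_le_bitWeight_sub_add hQ (t := t - 2 ^ e) (by omega) (by omega)
    rw [show 2 ^ e + 2 ^ e * M - t = 2 ^ e * M - (t - 2 ^ e) by omega]
    omega

lemma bitWeight_sum_Icc_two_pow {d : ℕ → ℕ} {j : ℕ} (hd : StrictAntiOn d (Set.Icc 1 j)) :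
    bitWeight (∑ i ∈ Icc 1 j, 2 ^ d i) = j := by
  induction j with
  | zero => simp [bitWeight]
  | succ j ih =>
    have hdvd : 2 ^ (d (j + 1) + 1) ∣ ∑ i ∈ Icc 1 j, 2 ^ d i :=
      dvd_sum fun i hi => by
        have hi := mem_Icc.mp hi
        exact pow_dvd_pow 2 (hd ⟨hi.1, by omega⟩ ⟨by omega, le_rfl⟩ (by omega))
    obtain ⟨M, hM⟩ := hdvd
    rw [sum_Icc_succ_top (by omega), hM, bitWeight_two_pow_mul_add _
      (Nat.pow_lt_pow_succ one_lt_two), bitWeight_two_pow, ← bitWeight_two_pow_mul (d (j + 1) + 1),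
      ← hM, ih (hd.mono (Set.Icc_subset_Icc_right j.le_succ))]

lemma sum_two_pow_sub_one_add_card {ι : Type*} (I : Finset ι) (f : ι → ℕ) :
    ∑ i ∈ I, (2 ^ f i - 1) + #I = ∑ i ∈ I, 2 ^ f i := by
  rw [card_eq_sum_ones, ← sum_add_distrib]
  exact sum_congr rfl fun i _ => Nat.sub_add_cancel Nat.one_le_two_pow

lemma sum_two_pow_sub_one_eq_two_mul_add_card {ι : Type*} (I : Finset ι) (f : ι → ℕ)
    (hf : ∀ i ∈ I, 0 < f i) :
    ∑ i ∈ I, (2 ^ f i - 1) = 2 * ∑ i ∈ I, (2 ^ (f i - 1) - 1) + #I := by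
  rw [card_eq_sum_ones, mul_sum, ← sum_add_distrib]
  refine sum_congr rfl fun i hi => ?_
  have h := pow_succ' 2 (f i - 1)
  rw [Nat.sub_add_cancel (hf i hi)] at h
  have := Nat.one_le_two_pow (n := f i - 1)
  omega

section Exponents

variable {k : ℕ} {d : ℕ → ℕ}

lemma antitoneOn_Icc_of_lt_of_le (hstrict : ∀ i, 2 ≤ i → i ≤ k - 2 → d i < d (i - 1))
    (hweak : d (k - 1) ≤ d (k - 2)) : AntitoneOn d (Set.Icc 1 (k - 1)) :=
  antitoneOn_of_le_sub_one Set.ordConnected_Icc fun i _ hi hi' => by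
    rcases lt_or_eq_of_le hi.2 with hlt | rfl
    · exact (hstrict i (by have := hi'.1; omega) (by omega)).le
    · rwa [show k - 1 - 1 = k - 2 by omega]

/-- The left side is `2^{d_{k-1}} + Q - (k - 1 - s)`, where `Q = ∑_{i ≤ k-2} 2^{d_i}` is divisible
by `2^{d_{k-1}}` and has `α(Q) = k - 2`. -/
lemma lt_bitWeight_sum_two_pow_sub_one_add (hpos : ∀ i, 1 ≤ i → i ≤ k - 1 → 0 < d i)
    (hstrict : ∀ i, 2 ≤ i → i ≤ k - 2 → d i < d (i - 1)) (hweak : d (k - 1) ≤ d (k - 2))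
    {s : ℕ} (hs : s + 2 ≤ k - 1) : s < bitWeight (∑ i ∈ Icc 1 (k - 1), (2 ^ d i - 1) + s) := by
  have hanti : StrictAntiOn d (Set.Icc 1 (k - 2)) :=
    strictAntiOn_of_lt_sub_one Set.ordConnected_Icc fun i _ hi hi' =>
      hstrict i (by have := hi'.1; omega) hi.2
  have hweight := bitWeight_sum_Icc_two_pow hanti
  have hdvd : 2 ^ d (k - 1) ∣ ∑ i ∈ Icc 1 (k - 2), 2 ^ d i :=
    dvd_sum fun i hi => by
      have hi := mem_Icc.mp hi
      exact pow_dvd_pow 2 (antitoneOn_Icc_of_lt_of_le hstrict hweak ⟨hi.1, by omega⟩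
        ⟨by omega, le_rfl⟩ (by omega))
  have htop : ∑ i ∈ Icc 1 (k - 1), 2 ^ d i = ∑ i ∈ Icc 1 (k - 2), 2 ^ d i + 2 ^ d (k - 1) := by
    obtain ⟨j, rfl⟩ : ∃ j, k = j + 2 := ⟨k - 2, by omega⟩
    exact sum_Icc_succ_top (by omega) _
  have hsum := sum_two_pow_sub_one_add_card (Icc 1 (k - 1)) d
  rw [Nat.card_Icc] at hsum
  have := bitWeight_add_two_le_bitWeight_two_pow_add_sub (hpos (k - 1) (by omega) le_rfl).ne'
    hdvd (t := k - 1 - s) (by omega) (by omega)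
  rw [show 2 ^ d (k - 1) + ∑ i ∈ Icc 1 (k - 2), 2 ^ d i - (k - 1 - s) =
    ∑ i ∈ Icc 1 (k - 1), (2 ^ d i - 1) + s by omega] at this
  omega

end Exponents

namespace MvPolynomial

section Graded

variable {σ R : Type*} [CommSemiring R]

attribute [local instance] MvPolynomial.gradedAlgebra

lemma degree_eq_of_mem_support {f : MvPolynomial σ R} {e : ℕ} (hf : f.IsHomogeneous e)
    {v : σ →₀ ℕ} (hv : v ∈ f.support) : v.degree = e :=
  (hf.degree_eq_sum_deg_support hv).symm

lemma homogeneousComponent_mul_of_isHomogeneous_left {p : MvPolynomial σ R} {i : ℕ}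
    (hp : p.IsHomogeneous i) (q : MvPolynomial σ R) (n : ℕ) :
    homogeneousComponent n (p * q) = if i ≤ n then p * homogeneousComponent (n - i) q else 0 := by
  simp only [← decomposition.decompose'_apply]
  exact DirectSum.coe_decompose_mul_of_left_mem (homogeneousSubmodule σ R) n hp

lemma homogeneousComponent_mul_of_isHomogeneous_right {q : MvPolynomial σ R} {i : ℕ}
    (hq : q.IsHomogeneous i) (p : MvPolynomial σ R) (n : ℕ) :
    homogeneousComponent n (p * q) = if i ≤ n then homogeneousComponent (n - i) p * q else 0 := by
  simp only [← decomposition.decompose'_apply]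
  exact DirectSum.coe_decompose_mul_of_right_mem (homogeneousSubmodule σ R) n hq

lemma homogeneousComponent_mul_of_totalDegree_le {p q : MvPolynomial σ R} {a b : ℕ}
    (hp : p.totalDegree ≤ a) (hq : q.totalDegree ≤ b) :
    homogeneousComponent (a + b) (p * q) = homogeneousComponent a p * homogeneousComponent b q := by
  conv_lhs => rw [← sum_homogeneousComponent q, mul_sum, map_sum]
  have hterm : ∀ j, homogeneousComponent (a + b) (p * homogeneousComponent j q) =
      if j ≤ a + b then homogeneousComponent (a + b - j) p * homogeneousComponent j q else 0 :=
    fun j => homogeneousComponent_mul_of_isHomogeneous_right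
      (homogeneousComponent_isHomogeneous j q) p _
  simp only [hterm]
  refine (sum_eq_single b (fun j hj hjb => ?_) (fun hb => ?_)).trans (by simp)
  · rw [mem_range] at hj
    rw [homogeneousComponent_eq_zero _ p (by omega), zero_mul, ite_self]
  · rw [mem_range, not_lt] at hb
    rw [homogeneousComponent_eq_zero b q (by omega), mul_zero, ite_self]

lemma homogeneousComponent_prod_of_totalDegree_le {ι : Type*} (s : Finset ι)
    (p : ι → MvPolynomial σ R) (a : ι → ℕ) (h : ∀ i ∈ s, (p i).totalDegree ≤ a i) :
    homogeneousComponent (∑ i ∈ s, a i) (∏ i ∈ s, p i) =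
      ∏ i ∈ s, homogeneousComponent (a i) (p i) := by
  classical
  induction s using Finset.induction_on with
  | empty => simp [homogeneousComponent_zero]
  | insert i s hi ih =>
    rw [prod_insert hi, sum_insert hi, prod_insert hi,
      homogeneousComponent_mul_of_totalDegree_le (h i (mem_insert_self i s))
        ((totalDegree_finsetProd s p).trans
          (sum_le_sum fun j hj => h j (mem_insert_of_mem hj))),
      ih fun j hj => h j (mem_insert_of_mem hj)]

lemma homogeneousComponent_pow_of_totalDegree_le {p : MvPolynomial σ R} {a : ℕ}
    (hp : p.totalDegree ≤ a) (n : ℕ) :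
    homogeneousComponent (n * a) (p ^ n) = homogeneousComponent a p ^ n := by
  simpa using homogeneousComponent_prod_of_totalDegree_le (range n) (fun _ => p) (fun _ => a)
    fun _ _ => hp

end Graded

section CharTwo

variable {σ R : Type*} [CommRing R] [CharP R 2]

lemma homogeneousComponent_sq (p : MvPolynomial σ R) (n : ℕ) :
    homogeneousComponent n (p ^ 2) =
      if Even n then homogeneousComponent (n / 2) p ^ 2 else 0 := by
  conv_lhs => rw [← sum_homogeneousComponent p, sum_pow_char, map_sum]
  have hterm : ∀ j, homogeneousComponent n (homogeneousComponent j p ^ 2) =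
      if n = 2 * j then homogeneousComponent j p ^ 2 else 0 := fun j =>
    homogeneousComponent_of_mem (by simpa [mul_comm] using
      (homogeneousComponent_isHomogeneous j p).pow 2)
  simp only [hterm]
  obtain ⟨m, rfl | rfl⟩ := Nat.even_or_odd' n
  · simp only [Nat.mul_left_cancel_iff two_pos, even_two_mul, if_true,
      Nat.mul_div_cancel_left m two_pos, sum_ite_eq, mem_range]
    split_ifs with hm
    · rfl
    · rw [homogeneousComponent_eq_zero m p (by omega), zero_pow two_ne_zero]
  · rw [if_neg (Nat.not_even_two_mul_add_one m)]
    exact sum_eq_zero fun j _ => if_neg (by omega)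

end CharTwo

section Steenrod

variable {k : ℕ}

local notation "P" => MvPolynomial (Fin k) (ZMod 2)

lemma SqTotal_X (j : Fin k) : SqTotal k (X j) = X j + X j ^ 2 := aeval_X _ _

lemma SqTotal_monomial (v : Fin k →₀ ℕ) (c : ZMod 2) :
    SqTotal k (monomial v c) = monomial v c * v.prod fun j n => (1 + X j) ^ n := by
  rw [SqTotal, aeval_monomial, monomial_eq, algebraMap_eq, mul_assoc, ← Finsupp.prod_mul]
  congr 2
  funext j n
  rw [← mul_pow]
  ring

lemma homogeneousComponent_SqTotal_monomial (v : Fin k →₀ ℕ) (c : ZMod 2) (D : ℕ) :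
    homogeneousComponent D (SqTotal k (monomial v c)) = if v.degree ≤ D then
      monomial v c * homogeneousComponent (D - v.degree) (v.prod fun j n => (1 + X j) ^ n)
    else 0 := by
  rw [SqTotal_monomial, homogeneousComponent_mul_of_isHomogeneous_left
    (isHomogeneous_monomial c rfl)]

lemma homogeneousComponent_prod_one_add_X_pow (v : Fin k →₀ ℕ) :
    homogeneousComponent v.degree (v.prod fun j n => (1 + X j : P) ^ n) = monomial v 1 := by
  have hX : ∀ j : Fin k, homogeneousComponent 1 (1 + X j : P) = X j := fun j => by
    rw [map_add, homogeneousComponent_eq_self (isHomogeneous_X _ j),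
      homogeneousComponent_of_mem (isHomogeneous_one _ _)]
    simp
  have htdeg : ∀ j : Fin k, (1 + X j : P).totalDegree ≤ 1 :=
    fun j => (totalDegree_add _ _).trans (by simp)
  rw [Finsupp.prod, Finsupp.degree_apply, homogeneousComponent_prod_of_totalDegree_le _ _ _
    fun j _ => (totalDegree_pow _ _).trans (by simpa using Nat.mul_le_mul_left (v j) (htdeg j)),
    ← prod_X_pow_eq_monomial]
  refine prod_congr rfl fun j _ => ?_
  simpa [hX] using homogeneousComponent_pow_of_totalDegree_le (htdeg j) (v j)

lemma homogeneousComponent_SqTotal_of_lt {f : P} {e D : ℕ} (hf : f.IsHomogeneous e) (hD : D < e) :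
    homogeneousComponent D (SqTotal k f) = 0 := by
  rw [as_sum f, map_sum, map_sum]
  refine sum_eq_zero fun v hv => ?_
  rw [homogeneousComponent_SqTotal_monomial, if_neg (by rw [degree_eq_of_mem_support hf hv]; omega)]

lemma homogeneousComponent_SqTotal_self {f : P} {e : ℕ} (hf : f.IsHomogeneous e) :
    homogeneousComponent e (SqTotal k f) = f := by
  conv_lhs => rw [as_sum f, map_sum, map_sum]
  conv_rhs => rw [as_sum f]
  refine sum_congr rfl fun v hv => ?_
  rw [homogeneousComponent_SqTotal_monomial, degree_eq_of_mem_support hf hv, if_pos le_rfl,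
    Nat.sub_self, homogeneousComponent_zero, ← constantCoeff_eq]
  simp [Finsupp.prod]

lemma homogeneousComponent_SqTotal_two_mul {f : P} {e : ℕ} (hf : f.IsHomogeneous e) :
    homogeneousComponent (2 * e) (SqTotal k f) = f ^ 2 := by
  conv_lhs => rw [as_sum f, map_sum, map_sum]
  conv_rhs => rw [as_sum f, sum_pow_char]
  refine sum_congr rfl fun v hv => ?_
  have hv := degree_eq_of_mem_support hf hv
  rw [homogeneousComponent_SqTotal_monomial, if_pos (by omega), show 2 * e - v.degree = v.degree by
    omega, homogeneousComponent_prod_one_add_X_pow, monomial_mul, pow_two, monomial_mul, mul_one,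
    ← pow_two, ZMod.pow_card]

lemma SqOp_of_isHomogeneous {f : P} {e : ℕ} (hf : f.IsHomogeneous e) (i : ℕ) :
    SqOp k i f = homogeneousComponent (e + i) (SqTotal k f) := by
  rcases eq_or_ne f 0 with rfl | hf0
  · simp [SqOp]
  rw [SqOp, hf.totalDegree hf0, sum_eq_single_of_mem e (self_mem_range_succ e) fun d _ hd => ?_,
    homogeneousComponent_eq_self hf]
  rw [homogeneousComponent_of_mem hf, if_neg hd, map_zero, map_zero]

lemma SqOp_self {f : P} {e : ℕ} (hf : f.IsHomogeneous e) : SqOp k e f = f ^ 2 := by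
  rw [SqOp_of_isHomogeneous hf, ← two_mul, homogeneousComponent_SqTotal_two_mul hf]

lemma SqOp_two_mul_sq {g : P} {μ : ℕ} (hg : g.IsHomogeneous μ) (c : ℕ) :
    SqOp k (2 * c) (g ^ 2) = SqOp k c g ^ 2 := by
  have hg2 : (g ^ 2).IsHomogeneous (2 * μ) := by simpa [mul_comm] using hg.pow 2
  rw [SqOp_of_isHomogeneous hg2, SqOp_of_isHomogeneous hg, map_pow, homogeneousComponent_sq,
    ← mul_add, if_pos (even_two_mul _), Nat.mul_div_cancel_left _ two_pos]

lemma homogeneousComponent_SqOp (f : P) (m i : ℕ) :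
    homogeneousComponent (m + i) (SqOp k i f) = SqOp k i (homogeneousComponent m f) := by
  rw [SqOp_of_isHomogeneous (homogeneousComponent_isHomogeneous m f), SqOp, map_sum]
  rcases lt_or_ge f.totalDegree m with hm | hm
  · rw [homogeneousComponent_eq_zero m f hm, map_zero, map_zero]
    refine sum_eq_zero fun d hd => ?_
    rw [homogeneousComponent_of_mem (homogeneousComponent_mem _ _), if_neg (by
      rw [mem_range] at hd; omega)]
  · refine (sum_eq_single_of_mem m (mem_range.mpr (by omega)) fun d _ hd => ?_).trans
      (homogeneousComponent_eq_self (homogeneousComponent_isHomogeneous _ _))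
    rw [homogeneousComponent_of_mem (homogeneousComponent_mem _ _), if_neg (by omega)]

lemma homogeneousComponent_SqOp_of_lt (f : P) {m i : ℕ} (h : m < i) :
    homogeneousComponent m (SqOp k i f) = 0 := by
  rw [SqOp, map_sum]
  exact sum_eq_zero fun d _ => by
    rw [homogeneousComponent_of_mem (homogeneousComponent_mem _ _), if_neg (by omega)]

lemma SqOp_mem_hitSubmodule {i : ℕ} (hi : 0 < i) (f : P) : SqOp k i f ∈ hitSubmodule k :=
  Submodule.subset_span ⟨i, f, hi, rfl⟩

/-- By instability, the degree-`D` part of `Sq f - f` is `∑_{e < D} Sq^{D-e} (f_e)`. -/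
lemma homogeneousComponent_SqTotal_sub_mem_hitSubmodule (f : P) (D : ℕ) :
    homogeneousComponent D (SqTotal k f) - homogeneousComponent D f ∈ hitSubmodule k := by
  rw [← sum_homogeneousComponent f, map_sum, map_sum, map_sum, ← sum_sub_distrib]
  refine Submodule.sum_mem _ fun e _ => ?_
  have he := homogeneousComponent_isHomogeneous e f
  rcases lt_trichotomy e D with hlt | rfl | hgt
  · rw [homogeneousComponent_of_mem he, if_neg hlt.ne', sub_zero, show D = e + (D - e) by omega,
      ← SqOp_of_isHomogeneous he]
    exact SqOp_mem_hitSubmodule (by omega) _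
  · rw [homogeneousComponent_SqTotal_self he, homogeneousComponent_eq_self he, sub_self]
    exact zero_mem _
  · rw [homogeneousComponent_SqTotal_of_lt he hgt, homogeneousComponent_of_mem he,
      if_neg hgt.ne, sub_zero]
    exact zero_mem _

/-- A truncation of `χ(Sq)(∏_{j ∈ S} X_j)`, where `χ(Sq)(x) = x + x² + x⁴ + ⋯` is the conjugate of
the total square: for large `L` its degree-`#S + A` part is `χ(Sq^A)(∏_{j ∈ S} X_j)`. -/
noncomputable def conjSqProd (S : Finset (Fin k)) (L : ℕ) : P :=
  ∏ j ∈ S, ∑ t ∈ range L, X j ^ 2 ^ t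

lemma SqTotal_sum_X_pow_two_pow (j : Fin k) (L : ℕ) :
    SqTotal k (∑ t ∈ range L, X j ^ 2 ^ t) = X j + X j ^ 2 ^ L := by
  induction L with
  | zero => simp [CharTwo.add_self_eq_zero]
  | succ L ih =>
    rw [sum_range_succ, map_add, ih, map_pow, SqTotal_X, add_pow_char_pow, ← pow_mul, ← pow_succ',
      add_assoc, ← add_assoc (X j ^ 2 ^ L), CharTwo.add_self_eq_zero, zero_add]

lemma SqTotal_conjSqProd (S : Finset (Fin k)) (L : ℕ) :
    SqTotal k (conjSqProd S L) = ∏ j ∈ S, (X j + X j ^ 2 ^ L) := by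
  rw [conjSqProd, map_prod]
  exact prod_congr rfl fun j _ => SqTotal_sum_X_pow_two_pow j L

lemma isHomogeneous_prod_X (S : Finset (Fin k)) : (∏ j ∈ S, X j : P).IsHomogeneous #S := by
  simpa using IsHomogeneous.prod S _ (fun _ => 1) fun j _ => isHomogeneous_X (ZMod 2) j

/-- The χ-trick `X_S · Sq^A(w) ≡ χ(Sq^A)(X_S) · w`, from `Sq f ≡ f` applied to
`conjSqProd S L * w`: in `Sq (conjSqProd S L) = ∏_{j ∈ S} (X_j + X_j^{2^L})` all terms but `X_S`
have too large a degree. -/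
lemma prod_X_mul_SqOp_sub_mem_hitSubmodule (S : Finset (Fin k)) {w : P} {e : ℕ}
    (hw : w.IsHomogeneous e) (A : ℕ) {L : ℕ} (hL : #S + e + A < 2 ^ L) :
    (∏ j ∈ S, X j) * SqOp k A w - homogeneousComponent (#S + A) (conjSqProd S L) * w ∈
      hitSubmodule k := by
  have key := homogeneousComponent_SqTotal_sub_mem_hitSubmodule (conjSqProd S L * w) (#S + e + A)
  rwa [homogeneousComponent_mul_of_isHomogeneous_right hw, if_pos (by omega),
    show #S + e + A - e = #S + A by omega, map_mul, SqTotal_conjSqProd, prod_add, sum_mul, map_sum,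
    sum_eq_single_of_mem S (mem_powerset_self S) fun T hT hTS => ?_, sdiff_self, bot_eq_empty,
    prod_empty, mul_one, homogeneousComponent_mul_of_isHomogeneous_left (isHomogeneous_prod_X S),
    if_pos (by omega), show #S + e + A - #S = e + A by omega, ← SqOp_of_isHomogeneous hw] at key
  have hpow : (∏ j ∈ S \ T, X j ^ 2 ^ L : P).IsHomogeneous (#(S \ T) * 2 ^ L) := by
    simpa using IsHomogeneous.prod _ _ (fun _ => 2 ^ L) fun j _ => isHomogeneous_X_pow j (2 ^ L)
  have hne : 1 ≤ #(S \ T) := card_pos.mpr (sdiff_nonempty.mpr fun h =>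
    hTS (subset_antisymm (mem_powerset.mp hT) h))
  rw [homogeneousComponent_mul_of_isHomogeneous_left ((isHomogeneous_prod_X T).mul hpow),
    if_neg (by nlinarith)]

/-- Every monomial of `conjSqProd S L` has degree a sum of `#S` powers of two. -/
lemma homogeneousComponent_conjSqProd_eq_zero (S : Finset (Fin k)) (L : ℕ) {N : ℕ}
    (h : #S < bitWeight N) : homogeneousComponent N (conjSqProd S L) = 0 := by
  unfold conjSqProd
  induction S using Finset.induction_on generalizing N with
  | empty =>
    rw [prod_empty, homogeneousComponent_of_mem (isHomogeneous_one _ _), if_neg]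
    rintro rfl
    simp [bitWeight] at h
  | insert j S hj ih =>
    rw [prod_insert hj, sum_mul, map_sum]
    refine sum_eq_zero fun t _ => ?_
    rw [homogeneousComponent_mul_of_isHomogeneous_left (isHomogeneous_X_pow j _)]
    split_ifs with ht
    · have := bitWeight_add_le (N - 2 ^ t) (2 ^ t)
      rw [Nat.sub_add_cancel ht, bitWeight_two_pow] at this
      rw [card_insert_of_notMem hj] at h
      rw [ih (by omega), mul_zero]
    · rfl

lemma prod_X_mul_sq_mem_hitSubmodule (S : Finset (Fin k)) {w : P} {m : ℕ}
    (hw : w.IsHomogeneous m) (h : #S < bitWeight (#S + m)) :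
    (∏ j ∈ S, X j) * w ^ 2 ∈ hitSubmodule k := by
  simpa [SqOp_self hw, homogeneousComponent_conjSqProd_eq_zero S _ h] using
    prod_X_mul_SqOp_sub_mem_hitSubmodule S hw m (Nat.lt_two_pow_self (n := #S + m + m))

lemma sum_range_succ_X_pow_two_pow (j : Fin k) (L : ℕ) :
    ∑ t ∈ range (L + 1), (X j : P) ^ 2 ^ t = X j + (∑ t ∈ range L, X j ^ 2 ^ t) ^ 2 := by
  rw [sum_range_succ', sum_pow_char, add_comm]
  simp [pow_succ, pow_mul]

/-- As `∑_{t ≤ L} X^{2^t} = X + (∑_{t < L} X^{2^t})²`, each term of `χ(Sq^{2c})(X_S)` with `c > 0`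
is `X_T · h²` with `#T + 2 ≤ #S`, and `X_T · (h g)²` is hit by `prod_X_mul_sq_mem_hitSubmodule`. -/
lemma prod_X_mul_SqOp_sq_mem_hitSubmodule (S : Finset (Fin k)) {g : P} {μ c : ℕ}
    (hg : g.IsHomogeneous μ) (hc : 0 < c)
    (harith : ∀ s m, s + 2 ≤ #S → s + 2 * m = #S + 2 * (μ + c) → s < bitWeight (s + m)) :
    (∏ j ∈ S, X j) * SqOp k c g ^ 2 ∈ hitSubmodule k := by
  have hg2 : (g ^ 2).IsHomogeneous (2 * μ) := by simpa [mul_comm] using hg.pow 2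
  set L := #S + 2 * μ + 2 * c
  have key := prod_X_mul_SqOp_sub_mem_hitSubmodule S hg2 (2 * c)
    (Nat.lt_two_pow_self.trans (Nat.pow_lt_pow_succ one_lt_two) : L < 2 ^ (L + 1))
  rw [SqOp_two_mul_sq hg] at key
  suffices h : homogeneousComponent (#S + 2 * c) (conjSqProd S (L + 1)) * g ^ 2 ∈ hitSubmodule k by
    simpa using add_mem key h
  rw [conjSqProd, prod_congr rfl fun j _ => sum_range_succ_X_pow_two_pow j L, prod_add,
    map_sum, sum_mul]
  refine Submodule.sum_mem _ fun T hT => ?_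
  have hcard : #T + #(S \ T) = #S := by
    rw [card_sdiff_of_subset (mem_powerset.mp hT)]
    have := card_le_card (mem_powerset.mp hT)
    omega
  rw [prod_pow, homogeneousComponent_mul_of_isHomogeneous_left (isHomogeneous_prod_X T),
    if_pos (by omega), homogeneousComponent_sq]
  split_ifs with heven
  · obtain ⟨q, hq⟩ := heven
    rcases Nat.eq_zero_or_pos (#(S \ T)) with hr | hr
    · rw [card_eq_zero.mp hr, prod_empty, homogeneousComponent_of_mem (isHomogeneous_one _ _),
        if_neg (by omega)]
      simp
    · rw [mul_assoc, ← mul_pow]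
      refine prod_X_mul_sq_mem_hitSubmodule T
        ((homogeneousComponent_isHomogeneous _ _).mul hg) (harith _ _ (by omega) (by omega))
  · simp

lemma prod_X_mul_sq_homogeneousComponent_mem_hitSubmodule (S : Finset (Fin k)) (m : ℕ)
    (harith : ∀ s m', s + 2 ≤ #S → s + 2 * m' = #S + 2 * m → s < bitWeight (s + m'))
    {y : P} (hy : y ∈ hitSubmodule k) :
    (∏ j ∈ S, X j) * homogeneousComponent m y ^ 2 ∈ hitSubmodule k := by
  induction hy using Submodule.span_induction with
  | mem z hz =>
    obtain ⟨i, f, hi, rfl⟩ := hz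
    rcases lt_or_ge m i with hmi | him
    · simp [homogeneousComponent_SqOp_of_lt f hmi]
    · obtain ⟨μ, rfl⟩ := Nat.exists_eq_add_of_le' him
      rw [homogeneousComponent_SqOp]
      exact prod_X_mul_SqOp_sq_mem_hitSubmodule S (homogeneousComponent_isHomogeneous μ f) hi
        harith
  | zero => simp
  | add y z _ _ hy hz =>
    rw [map_add, add_pow_char, mul_add]
    exact add_mem hy hz
  | smul r z _ hz =>
    rw [map_smul, smul_pow, mul_smul_comm]
    exact Submodule.smul_mem _ _ hz

end Steenrod

end MvPolynomial

section Monomials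

variable {k : ℕ}

def oddSet (a : Fin k →₀ ℕ) : Finset (Fin k) := univ.filter fun j => (a j).testBit 0

noncomputable def halfExp (a : Fin k →₀ ℕ) : Fin k →₀ ℕ :=
  Finsupp.mapRange (· / 2) (Nat.zero_div 2) a

lemma wvec_zero (a : Fin k →₀ ℕ) : wvec k a 0 = #(oddSet a) := rfl

lemma wvec_succ (a : Fin k →₀ ℕ) (i : ℕ) : wvec k a (i + 1) = wvec k (halfExp a) i := by
  unfold wvec
  congr 1
  exact filter_congr fun j _ => by simp [halfExp, Nat.testBit_succ]

lemma mem_oddSet {a : Fin k →₀ ℕ} {j : Fin k} : j ∈ oddSet a ↔ a j % 2 = 1 := by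
  simp [oddSet, Nat.testBit_zero]

lemma eq_sum_single_oddSet_add (a : Fin k →₀ ℕ) :
    a = ∑ j ∈ oddSet a, Finsupp.single j 1 + 2 • halfExp a := by
  ext j
  simp only [Finsupp.add_apply, Finsupp.finsetSum_apply, Finsupp.single_apply, sum_ite_eq',
    Finsupp.smul_apply, smul_eq_mul, halfExp, Finsupp.mapRange_apply, mem_oddSet]
  split_ifs <;> omega

lemma monomial_eq_prod_X_mul_sq (a : Fin k →₀ ℕ) :
    monomial a (1 : ZMod 2) = (∏ j ∈ oddSet a, X j) * monomial (halfExp a) 1 ^ 2 := by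
  conv_lhs => rw [eq_sum_single_oddSet_add a]
  rw [monomial_pow, one_pow, ← mul_one (1 : ZMod 2), ← monomial_mul, monomial_sum_one]
  rfl

lemma sum_eq_card_oddSet_add (a : Fin k →₀ ℕ) :
    ∑ j, a j = #(oddSet a) + 2 * ∑ j, halfExp a j := by
  have := congrArg Finsupp.degree (eq_sum_single_oddSet_add a)
  simpa [map_add, map_sum, map_nsmul, Finsupp.degree_single, Finsupp.degree_eq_sum] using this

lemma isHomogeneous_monomial_sum (b : Fin k →₀ ℕ) (c : ZMod 2) :
    (monomial b c).IsHomogeneous (∑ j, b j) :=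
  isHomogeneous_monomial c (Finsupp.degree_eq_sum b)

lemma bitWeight_le_wvec_zero_of_not_isHit {a : Fin k →₀ ℕ}
    (h : ¬ IsHit k (monomial a (1 : ZMod 2))) :
    bitWeight (∑ j, a j + wvec k a 0) ≤ wvec k a 0 := by
  by_contra hlt
  apply h
  rw [IsHit, monomial_eq_prod_X_mul_sq]
  refine prod_X_mul_sq_mem_hitSubmodule _ (isHomogeneous_monomial_sum _ _) ?_
  rwa [sum_eq_card_oddSet_add, wvec_zero, show #(oddSet a) + 2 * ∑ j, halfExp a j + #(oddSet a) =
    2 * (#(oddSet a) + ∑ j, halfExp a j) by ring, bitWeight_two_mul, not_le] at hlt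

lemma not_isHit_halfExp {a : Fin k →₀ ℕ}
    (harith : ∀ s, s + 2 ≤ wvec k a 0 → s < bitWeight (∑ j, a j + s))
    (h : ¬ IsHit k (monomial a (1 : ZMod 2))) : ¬ IsHit k (monomial (halfExp a) (1 : ZMod 2)) := by
  intro hhalf
  apply h
  have := prod_X_mul_sq_homogeneousComponent_mem_hitSubmodule (oddSet a) (∑ j, halfExp a j)
    (fun s m hs hsm => ?_) hhalf
  · rwa [homogeneousComponent_eq_self (isHomogeneous_monomial_sum _ _),
      ← monomial_eq_prod_X_mul_sq] at this
  · have := harith s hs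
    rwa [sum_eq_card_oddSet_add, ← wvec_zero, show wvec k a 0 + 2 * ∑ j, halfExp a j + s =
      2 * (s + m) by rw [wvec_zero]; omega, bitWeight_two_mul] at this

end Monomials

section Main

variable {k : ℕ} {d : ℕ → ℕ}

lemma wvec_zero_eq_of_not_isHit (hpos : ∀ i, 1 ≤ i → i ≤ k - 1 → 0 < d i)
    (hstrict : ∀ i, 2 ≤ i → i ≤ k - 2 → d i < d (i - 1)) (hweak : d (k - 1) ≤ d (k - 2))
    {a : Fin k →₀ ℕ} (ha : ∑ j, a j = ∑ i ∈ Icc 1 (k - 1), (2 ^ d i - 1))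
    (hnothit : ¬ IsHit k (monomial a (1 : ZMod 2))) : wvec k a 0 = k - 1 := by
  have hdeg := sum_eq_card_oddSet_add a
  have hn := sum_two_pow_sub_one_eq_two_mul_add_card (Icc 1 (k - 1)) d
    fun i hi => hpos i (mem_Icc.mp hi).1 (mem_Icc.mp hi).2
  rw [Nat.card_Icc, ← ha] at hn
  have hle : wvec k a 0 ≤ k := (card_filter_le _ _).trans_eq (card_fin k)
  have hweight := bitWeight_le_wvec_zero_of_not_isHit hnothit
  -- `wvec k a 0 ≡ ∑ j, a j ≡ k - 1 (mod 2)` and `wvec k a 0 ≤ k`, else `wvec k a 0 + 2 ≤ k - 1`.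
  by_contra hne
  have := lt_bitWeight_sum_two_pow_sub_one_add hpos hstrict hweak (s := wvec k a 0)
    (by rw [wvec_zero] at hle hne ⊢; omega)
  rw [← ha] at this
  omega

lemma sum_halfExp_eq (hpos : ∀ i, 1 ≤ i → i ≤ k - 1 → 0 < d i) {a : Fin k →₀ ℕ}
    (ha : ∑ j, a j = ∑ i ∈ Icc 1 (k - 1), (2 ^ d i - 1)) (hodd : wvec k a 0 = k - 1) :
    ∑ j, halfExp a j = ∑ i ∈ Icc 1 (k - 1), (2 ^ (d i - 1) - 1) := by
  have := sum_two_pow_sub_one_eq_two_mul_add_card (Icc 1 (k - 1)) d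
    fun i hi => hpos i (mem_Icc.mp hi).1 (mem_Icc.mp hi).2
  rw [Nat.card_Icc, ← ha, sum_eq_card_oddSet_add, ← wvec_zero, hodd] at this
  omega

end Main

theorem stmt14_general (k : ℕ) (d : ℕ → ℕ)
    (hpos : ∀ i, 1 ≤ i → i ≤ k - 1 → 0 < d i)
    (hstrict : ∀ i, 2 ≤ i → i ≤ k - 2 → d i < d (i - 1))
    (hweak : d (k - 1) ≤ d (k - 2))
    (a : Fin k →₀ ℕ)
    (ha : ∑ j, a j = ∑ i ∈ Finset.Icc 1 (k - 1), (2 ^ d i - 1))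
    (hnothit : ¬ IsHit k (MvPolynomial.monomial a (1 : ZMod 2))) :
    ∀ i, i < d (k - 1) → wvec k a i = k - 1 := by
  intro i hi
  induction i generalizing d a with
  | zero => exact wvec_zero_eq_of_not_isHit hpos hstrict hweak ha hnothit
  | succ i ih =>
    have hodd := wvec_zero_eq_of_not_isHit hpos hstrict hweak ha hnothit
    have hd : ∀ j, 1 ≤ j → j ≤ k - 1 → i + 2 ≤ d j := fun j h1 h2 =>
      (show i + 2 ≤ d (k - 1) by omega).trans
        (antitoneOn_Icc_of_lt_of_le hstrict hweak ⟨h1, h2⟩ ⟨by omega, le_rfl⟩ h2)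
    rw [wvec_succ]
    refine ih (fun j => d j - 1) (fun j h1 h2 => by have := hd j h1 h2; omega)
      (fun j h1 h2 => by have := hstrict j h1 h2; have := hd j (by omega) (by omega); omega)
      (by omega) (halfExp a) (sum_halfExp_eq hpos ha hodd)
      (not_isHit_halfExp (fun s hs => ?_) hnothit) (by omega)
    rw [ha]
    exact lt_bitWeight_sum_two_pow_sub_one_add hpos hstrict hweak (hodd ▸ hs)

/-- Lemma 2.12: for `k ≥ 3`, integers `d_1 > … > d_{k-2} ≥ d_{k-1} > 0` and
`n = Σ_{i=1}^{k-1} (2^{d_i} - 1)`, if a monomial `x` of degree `n` in `P_k` is not hit,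
then `ω_i(x) = k - 1` for `1 ≤ i ≤ d_{k-1}`. -/
theorem stmt14 (k : ℕ) (hk : 3 ≤ k) (d : ℕ → ℕ)
    (hpos : ∀ i, 1 ≤ i → i ≤ k - 1 → 0 < d i)
    (hstrict : ∀ i, 2 ≤ i → i ≤ k - 2 → d i < d (i - 1))
    (hweak : d (k - 1) ≤ d (k - 2))
    (a : Fin k →₀ ℕ)
    (ha : ∑ j, a j = ∑ i ∈ Finset.Icc 1 (k - 1), (2 ^ d i - 1))
    (hnothit : ¬ IsHit k (MvPolynomial.monomial a (1 : ZMod 2))) :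
    ∀ i, i < d (k - 1) → wvec k a i = k - 1 :=
  stmt14_general k d hpos hstrict hweak a ha hnothit
end

section
/- Let x, y, w be monomials in P_k and let r, s be positive integers such that ω_i(x) = 0 for all i > r, ω_s(w) ≠ 0, and ω_i(w) = 0 for all i > s. (i) If w is inadmissible, then the monomial x·w^{2^r} is inadmissible. (ii) If w is strictly inadmissible, then the monomial x·w^{2^r}·y^{2^{r+s}} is inadmissible. -/
open MvPolynomial

/-- Left lexicographic order on the exponent vectors themselves, and the order `x < y`
on monomials of the same degree: either `ω(x) < ω(y)` lexicographically, or
`ω(x) = ω(y)` and `(ν_1(x), …, ν_k(x))` precedes `(ν_1(y), …, ν_k(y))`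
lexicographically. -/
def monLT (k : ℕ) (a b : Fin k →₀ ℕ) : Prop :=
  wlt (wvec k a) (wvec k b) ∨
    ((∀ i, wvec k a i = wvec k b i) ∧ ∃ j : Fin k, (∀ i, i < j → a i = b i) ∧ a j < b j)

/-- A monomial (given by its exponent vector `a`) is inadmissible: there are monomials
`y_1, …, y_t` of the same degree with `y_j < x` such that `x - (y_1 + … + y_t)` is hit. -/
def Inadmissible (k : ℕ) (a : Fin k →₀ ℕ) : Prop :=
  ∃ (t : ℕ) (y : Fin t → (Fin k →₀ ℕ)),
    (∀ j, (∑ i : Fin k, y j i) = ∑ i : Fin k, a i) ∧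
    (∀ j, monLT k (y j) a) ∧
    IsHit k (MvPolynomial.monomial a (1 : ZMod 2) +
      ∑ j, MvPolynomial.monomial (y j) (1 : ZMod 2))

/-- A monomial is admissible if it is not inadmissible. -/
def Admissible (k : ℕ) (a : Fin k →₀ ℕ) : Prop := ¬ Inadmissible k a

/-- A monomial is strictly inadmissible: there are smaller monomials `y_1, …, y_t` of the
same degree such that `x - (y_1 + … + y_t)` lies in the span of the `Sq^u (g)` with
`1 ≤ u < 2^s`, where `s = max { i | ω_i(x) > 0 }`. -/
def StrictlyInadmissible (k : ℕ) (a : Fin k →₀ ℕ) : Prop :=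
  ∃ s : ℕ, 0 < s ∧ wvec k a (s - 1) ≠ 0 ∧ (∀ i, s ≤ i → wvec k a i = 0) ∧
    ∃ (t : ℕ) (y : Fin t → (Fin k →₀ ℕ)),
      (∀ j, (∑ i : Fin k, y j i) = ∑ i : Fin k, a i) ∧
      (∀ j, monLT k (y j) a) ∧
      (MvPolynomial.monomial a (1 : ZMod 2) +
          ∑ j, MvPolynomial.monomial (y j) (1 : ZMod 2)) ∈
        Submodule.span (ZMod 2) {g | ∃ u f, 1 ≤ u ∧ u < 2 ^ s ∧ g = SqOp k u f}

/-
Let `x` have exponent vector `a` with every entry below `2^r`. By the Cartan formula,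
`Sq(x · g^(2^r)) = (x + R) · Sq(g)^(2^r)`, where `R = Sq(x) - x` is a sum of monomials `x^(a+c)`
with `c ≠ 0` bitwise contained in `a` (Lucas). At the lowest bit of `c`, adding `c` to `a` clears
bits of `a` and changes no lower bit, so every monomial of `R · (anything)^(2^r)` has a smaller
weight vector than `x · w^(2^r)`. Taking the degree `|x| + 2^r (|g| + u)` part shows that
`x · (Sq^u g)^(2^r)` is hit modulo smaller monomials; applying `h ↦ x · h^(2^r)` to a relation
`w ≡ Σ z_j` modulo hit polynomials gives (i).

For (ii), `Sq^j(y^(2^s)) = 0` for `0 < j < 2^s`, so multiplying a relation modulo the `Sq^u`,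
`u < 2^s`, by `y^(2^s)` gives a relation modulo hit polynomials; the `z_j · y^(2^s)` stay below
`w · y^(2^s)` because the weights of `w` vanish from position `s` on. Thus `w · y^(2^s)` is
inadmissible and (i) applies to it.
-/

namespace Nat

theorem testBit_of_choose_ne_zero {n m i : ℕ} (h : (n.choose m : ZMod 2) ≠ 0)
    (hm : m.testBit i) : n.testBit i := by
  have lucas (n m : ℕ) :
      (n.choose m : ZMod 2) = (n % 2).choose (m % 2) * (n / 2).choose (m / 2) := by
    exact_mod_cast (ZMod.natCast_eq_natCast_iff _ _ _).2
      Choose.choose_modEq_choose_mod_mul_choose_div_nat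
  induction i generalizing n m with
  | zero =>
    simp only [testBit_zero, decide_eq_true_eq] at hm ⊢
    by_contra hn
    exact h (by rw [lucas, show n % 2 = 0 by omega, hm, choose_zero_succ]; simp)
  | succ i ih =>
    rw [testBit_add_one] at hm ⊢
    exact ih (fun h' => h (by rw [lucas, h', mul_zero])) hm

theorem testBit_eq_of_modEq {a b i : ℕ} (h : a ≡ b [MOD 2 ^ (i + 1)]) :
    a.testBit i = b.testBit i := by
  have ha := testBit_mod_two_pow a (i + 1) i
  have hb := testBit_mod_two_pow b (i + 1) i
  simp only [lt_add_one, decide_true, Bool.true_and] at ha hb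
  rw [← ha, ← hb, h]

theorem two_pow_dvd_of_testBit_eq_false {n i : ℕ} (h : ∀ l < i, n.testBit l = false) :
    2 ^ i ∣ n := by
  refine dvd_of_mod_eq_zero (zero_of_testBit_eq_false fun l => ?_)
  rw [testBit_mod_two_pow]
  by_cases hl : l < i <;> simp [hl, h]

theorem testBit_add_of_two_pow_dvd (a : ℕ) {c i : ℕ} (hc : 2 ^ i ∣ c) :
    (a + c).testBit i = (a.testBit i ^^ c.testBit i) := by
  obtain ⟨d, rfl⟩ := hc
  rw [add_comm, testBit_mul_two_pow_add_eq, testBit_two_pow_mul]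
  simp [Bool.xor_comm]

end Nat

namespace MvPolynomial

section Homogeneous

variable {σ R : Type*} [CommSemiring R]

theorem homogeneousComponent_mul_of_isHomogeneous {P : MvPolynomial σ R} {n : ℕ}
    (hP : P.IsHomogeneous n) (m : ℕ) (Q : MvPolynomial σ R) :
    homogeneousComponent (n + m) (P * Q) = P * homogeneousComponent m Q := by
  induction Q using induction_on' with
  | monomial v r =>
    rw [homogeneousComponent_of_mem (hP.mul (isHomogeneous_monomial r rfl)),
      homogeneousComponent_of_mem (isHomogeneous_monomial r rfl)]
    by_cases h : m = v.degree <;> simp [h]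
  | add Q₁ Q₂ h₁ h₂ => simp only [mul_add, map_add, h₁, h₂]

theorem homogeneousComponent_expand {p : ℕ} (hp : 0 < p) (m : ℕ) (Q : MvPolynomial σ R) :
    homogeneousComponent (p * m) (expand p Q) = expand p (homogeneousComponent m Q) := by
  induction Q using induction_on' with
  | monomial v r =>
    rw [expand_monomial, homogeneousComponent_of_mem (isHomogeneous_monomial r rfl),
      homogeneousComponent_of_mem (isHomogeneous_monomial r rfl)]
    by_cases h : m = v.degree <;> simp [h, hp.ne']
  | add Q₁ Q₂ h₁ h₂ => simp only [map_add, h₁, h₂]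

theorem IsHomogeneous.expand {P : MvPolynomial σ R} {n p : ℕ} (hP : P.IsHomogeneous n)
    (hp : 0 < p) : (expand p P).IsHomogeneous (p * n) := by
  rw [← homogeneousComponent_eq_self hP, ← homogeneousComponent_expand hp]
  exact homogeneousComponent_isHomogeneous _ _

theorem expand_mem_restrictSupport {s : Set (σ →₀ ℕ)} {Q : MvPolynomial σ R}
    (hQ : Q ∈ restrictSupport R s) (p : ℕ) : expand p Q ∈ restrictSupport R ((p • ·) '' s) := by
  rw [restrictSupport_eq_span] at hQ
  refine (Submodule.span_le (p := (restrictSupport R ((p • ·) '' s)).comap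
    (expand p).toLinearMap)).2 ?_ hQ
  rintro _ ⟨v, hv, rfl⟩
  simp [Set.mem_image_of_mem _ hv]

theorem homogeneousComponent_mem_restrictSupport {s : Set (σ →₀ ℕ)} {P : MvPolynomial σ R}
    (hP : P ∈ restrictSupport R s) (n : ℕ) : homogeneousComponent n P ∈ restrictSupport R s := by
  rw [mem_restrictSupport_iff, support_homogeneousComponent] at *
  exact fun v hv => hP (Finset.mem_filter.1 hv).1

end Homogeneous

section CharTwo

variable {σ : Type*}

theorem expand_two_pow_eq_pow (r : ℕ) (f : MvPolynomial σ (ZMod 2)) :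
    expand (2 ^ r) f = f ^ 2 ^ r := by
  induction r with
  | zero => simp
  | succ r ih => rw [pow_succ', expand_mul, ih, expand_zmod, pow_mul']

theorem eq_sum_monomial_one (P : MvPolynomial σ (ZMod 2)) :
    P = ∑ v ∈ P.support, monomial v 1 := by
  conv_lhs => rw [P.as_sum]
  refine Finset.sum_congr rfl fun v hv => ?_
  have (x : ZMod 2) (hx : x ≠ 0) : x = 1 := by revert x; decide
  rw [this _ (mem_support_iff.1 hv)]

end CharTwo

end MvPolynomial

section Weights

variable {k : ℕ}

theorem wvec_congr_modEq {v w : Fin k →₀ ℕ} {i : ℕ} (h : ∀ j, v j ≡ w j [MOD 2 ^ (i + 1)]) :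
    wvec k v i = wvec k w i := by
  simp only [wvec, fun j => Nat.testBit_eq_of_modEq (h j)]

theorem lt_two_pow_of_wvec_eq_zero {a : Fin k →₀ ℕ} {r : ℕ}
    (h : ∀ i, r ≤ i → wvec k a i = 0) (j : Fin k) : a j < 2 ^ r := by
  refine Nat.lt_pow_two_of_testBit _ fun i hi => ?_
  have := h i hi
  simp only [wvec, Finset.card_eq_zero, Finset.filter_eq_empty_iff] at this
  simpa using this (Finset.mem_univ j)

theorem wvec_add_two_pow_smul_of_lt {x y : Fin k →₀ ℕ} {r i : ℕ} (hi : i < r) :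
    wvec k (x + 2 ^ r • y) i = wvec k x i := by
  refine wvec_congr_modEq fun j => ?_
  obtain ⟨e, he⟩ := pow_dvd_pow 2 (show i + 1 ≤ r by omega)
  simp [he, mul_assoc, Nat.ModEq]

theorem wvec_add_two_pow_smul {x : Fin k →₀ ℕ} {r : ℕ} (hx : ∀ j, x j < 2 ^ r)
    (y : Fin k →₀ ℕ) (i : ℕ) :
    wvec k (x + 2 ^ r • y) i = if i < r then wvec k x i else wvec k y (i - r) := by
  have (j : Fin k) : (x + 2 ^ r • y) j = 2 ^ r * y j + x j := by simp [add_comm]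
  split_ifs with hi <;> simp [wvec, this, Nat.testBit_two_pow_mul_add _ (hx _), hi]

-- At the lowest bit `i` occurring in some `c j`, adding `c` leaves the bits below `i` alone
-- and clears bit `i` of each `a j` for which `c j` has it.
theorem exists_wvec_add_lt {a c : Fin k →₀ ℕ} (hc : c ≠ 0)
    (hca : ∀ j i, (c j).testBit i → (a j).testBit i) :
    ∃ i, (∃ j, (a j).testBit i) ∧ (∀ l < i, wvec k (a + c) l = wvec k a l) ∧
      wvec k (a + c) i < wvec k a i := by
  obtain ⟨i, ⟨j₀, hj₀⟩, hmin⟩ :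
      ∃ i, (∃ j, (c j).testBit i) ∧ ∀ l < i, ∀ j, ¬(c j).testBit l := by
    have hex : ∃ i j, (c j).testBit i := by
      obtain ⟨j, hj⟩ := Finsupp.ne_iff.1 hc
      exact (Nat.exists_testBit_of_ne_zero hj).imp fun i hi => ⟨j, hi⟩
    exact ⟨Nat.find hex, Nat.find_spec hex, fun l hl j h => Nat.find_min hex hl ⟨j, h⟩⟩
  have hdvd (j : Fin k) : 2 ^ i ∣ c j :=
    Nat.two_pow_dvd_of_testBit_eq_false fun l hl => by simpa using hmin l hl j
  refine ⟨i, ⟨j₀, hca _ _ hj₀⟩, fun l hl => wvec_congr_modEq fun j => ?_, ?_⟩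
  · obtain ⟨e, he⟩ := (pow_dvd_pow 2 hl).trans (hdvd j)
    simp [he, Nat.ModEq]
  · have hbit (j : Fin k) :
        (a j + c j).testBit i = ((a j).testBit i ^^ (c j).testBit i) :=
      Nat.testBit_add_of_two_pow_dvd _ (hdvd j)
    refine Finset.card_lt_card ((Finset.ssubset_iff_of_subset fun j hj => ?_).2 ⟨j₀, ?_⟩)
    · have := hca j i
      simp only [Finset.mem_filter, Finset.mem_univ, true_and, Finsupp.coe_add, Pi.add_apply,
        hbit] at hj ⊢
      revert hj this
      cases (a j).testBit i <;> cases (c j).testBit i <;> simp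
    · simp [Finset.mem_filter, hbit, hj₀, hca _ _ hj₀]

theorem monLT_add_add_two_pow_smul {a c : Fin k →₀ ℕ} {r : ℕ} (ha : ∀ j, a j < 2 ^ r)
    (hc : c ≠ 0) (hca : ∀ j i, (c j).testBit i → (a j).testBit i) (p b : Fin k →₀ ℕ) :
    monLT k (a + c + 2 ^ r • p) (a + 2 ^ r • b) := by
  obtain ⟨i, ⟨j, hj⟩, heq, hlt⟩ := exists_wvec_add_lt hc hca
  have hir : i < r := by
    by_contra! h
    have := Nat.testBit_lt_two_pow ((ha j).trans_le (Nat.pow_le_pow_right two_pos h))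
    simp_all
  refine Or.inl ⟨i, fun l hl => ?_, ?_⟩
  · rw [wvec_add_two_pow_smul_of_lt (hl.trans hir),
      wvec_add_two_pow_smul_of_lt (hl.trans hir), heq l hl]
  · rwa [wvec_add_two_pow_smul_of_lt hir, wvec_add_two_pow_smul_of_lt hir]

theorem monLT_add_two_pow_smul {a z d : Fin k →₀ ℕ} {r : ℕ} (ha : ∀ j, a j < 2 ^ r)
    (h : monLT k z d) : monLT k (a + 2 ^ r • z) (a + 2 ^ r • d) := by
  rcases h with ⟨i, heq, hlt⟩ | ⟨heq, j, hj, hlt⟩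
  · refine Or.inl ⟨r + i, fun l hl => ?_, ?_⟩
    · simp only [wvec_add_two_pow_smul ha]
      split_ifs
      · rfl
      · exact heq _ (by omega)
    · simpa [wvec_add_two_pow_smul ha] using hlt
  · refine Or.inr ⟨fun i => by simp [wvec_add_two_pow_smul ha, heq], j, fun i hi => ?_, ?_⟩
    · simp [hj i hi]
    · simpa using hlt

theorem monLT_add_two_pow_smul_right {z b : Fin k →₀ ℕ} {s : ℕ}
    (hb : ∀ i, s ≤ i → wvec k b i = 0) (h : monLT k z b) (c : Fin k →₀ ℕ) :
    monLT k (z + 2 ^ s • c) (b + 2 ^ s • c) := by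
  rcases h with ⟨i, heq, hlt⟩ | ⟨heq, j, hj, hlt⟩
  · have his : i < s := by
      by_contra! h
      exact absurd (hb i h ▸ hlt) (Nat.not_lt_zero _)
    refine Or.inl ⟨i, fun l hl => ?_, ?_⟩
    · rw [wvec_add_two_pow_smul_of_lt (hl.trans his),
        wvec_add_two_pow_smul_of_lt (hl.trans his), heq l hl]
    · rwa [wvec_add_two_pow_smul_of_lt his, wvec_add_two_pow_smul_of_lt his]
  · have hz := lt_two_pow_of_wvec_eq_zero fun i hi => (heq i).trans (hb i hi)
    have hb' := lt_two_pow_of_wvec_eq_zero hb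
    refine Or.inr ⟨fun i => by simp [wvec_add_two_pow_smul hz, wvec_add_two_pow_smul hb', heq],
      j, fun i hi => ?_, ?_⟩
    · simp [hj i hi]
    · simpa using hlt

end Weights

section Steenrod

variable {k : ℕ}

theorem sqTotal_X (j : Fin k) : SqTotal k (X j) = X j + X j ^ 2 := by
  simp [SqTotal]

theorem sqTotal_X_pow (j : Fin k) (n : ℕ) :
    SqTotal k (X j ^ n) =
      ∑ m ∈ Finset.range (n + 1), monomial (Finsupp.single j (n + m)) (n.choose m : ZMod 2) := by
  rw [map_pow, sqTotal_X, add_comm, add_pow]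
  refine Finset.sum_congr rfl fun m hm => ?_
  have := Finset.mem_range_succ_iff.1 hm
  rw [← pow_mul, ← pow_add, show 2 * m + (n - m) = n + m by omega, X_pow_eq_monomial,
    ← map_natCast C, mul_comm, C_mul_monomial, mul_one]

theorem sqTotal_monomial (a : Fin k →₀ ℕ) :
    SqTotal k (monomial a 1) =
      ∑ c ∈ Fintype.piFinset fun j => Finset.range (a j + 1),
        monomial (a + Finsupp.equivFunOnFinite.symm c) (∏ j, ((a j).choose (c j) : ZMod 2)) := by
  rw [monomial_eq, C_1, one_mul, Finsupp.prod_fintype _ _ (fun _ => pow_zero _), map_prod]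
  simp only [sqTotal_X_pow, Finset.prod_univ_sum, ← monomial_sum_prod]
  refine Finset.sum_congr rfl fun c _ => ?_
  have : ∑ j, Finsupp.single j (a j + c j) = a + Finsupp.equivFunOnFinite.symm c := by
    ext j
    simp [Finsupp.single_apply, Finset.sum_add_distrib]
  rw [this]

theorem sqTotal_monomial_sub_mem (a : Fin k →₀ ℕ) :
    SqTotal k (monomial a 1) - monomial a 1 ∈ restrictSupport (ZMod 2)
      {w | ∃ c, c ≠ 0 ∧ (∀ j i, (c j).testBit i → (a j).testBit i) ∧ w = a + c} := by
  have h0 : (0 : Fin k → ℕ) ∈ Fintype.piFinset fun j => Finset.range (a j + 1) := by simp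
  rw [sqTotal_monomial, ← Finset.add_sum_erase _ _ h0]
  have h0' : Finsupp.equivFunOnFinite.symm (0 : Fin k → ℕ) = 0 :=
    Finsupp.equivFunOnFinite_symm_coe 0
  simp only [h0', Pi.zero_apply, Nat.choose_zero_right, Nat.cast_one, Finset.prod_const_one,
    add_zero, add_sub_cancel_left]
  refine Submodule.sum_mem _ fun c hc => ?_
  by_cases h : ∏ j, ((a j).choose (c j) : ZMod 2) = 0
  · simp [h]
  refine (monomial_mem_restrictSupport _).2 (Or.inl ⟨_, ?_, fun j i =>
    Nat.testBit_of_choose_ne_zero (Finset.prod_ne_zero_iff.1 h j (Finset.mem_univ j)), rfl⟩)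
  exact fun h => Finset.ne_of_mem_erase hc
    (by rw [← Finsupp.coe_equivFunOnFinite_symm c, h]; rfl)

theorem sqTotal_expand_two_pow (r : ℕ) (f : MvPolynomial (Fin k) (ZMod 2)) :
    SqTotal k (expand (2 ^ r) f) = expand (2 ^ r) (SqTotal k f) := by
  rw [expand_two_pow_eq_pow, expand_two_pow_eq_pow, map_pow]

theorem sqOp_of_isHomogeneous {g : MvPolynomial (Fin k) (ZMod 2)} {d : ℕ}
    (hg : g.IsHomogeneous d) (u : ℕ) :
    SqOp k u g = homogeneousComponent (d + u) (SqTotal k g) := by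
  rcases eq_or_ne g 0 with rfl | hg0
  · simp [SqOp]
  rw [SqOp, hg.totalDegree hg0, Finset.sum_eq_single_of_mem d (Finset.self_mem_range_succ d),
    homogeneousComponent_eq_self hg]
  intro d' _ hne
  rw [homogeneousComponent_of_mem hg, if_neg hne, map_zero, map_zero]

theorem homogeneousComponent_sqTotal_mem_hitSubmodule {g : MvPolynomial (Fin k) (ZMod 2)}
    {d D : ℕ} (hg : g.IsHomogeneous d) (hD : d < D) :
    homogeneousComponent D (SqTotal k g) ∈ hitSubmodule k := by
  obtain ⟨u, rfl⟩ := Nat.exists_eq_add_of_lt hD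
  rw [add_assoc, ← sqOp_of_isHomogeneous hg]
  exact Submodule.subset_span ⟨u + 1, g, u.succ_pos, rfl⟩

theorem homogeneousComponent_mem_hitSubmodule {h : MvPolynomial (Fin k) (ZMod 2)}
    (hh : h ∈ hitSubmodule k) (D : ℕ) : homogeneousComponent D h ∈ hitSubmodule k := by
  induction hh using Submodule.span_induction with
  | mem _ hx =>
    obtain ⟨u, f, hu, rfl⟩ := hx
    rw [SqOp, map_sum]
    refine Submodule.sum_mem _ fun d _ => ?_
    rw [homogeneousComponent_of_mem (homogeneousComponent_isHomogeneous _ _)]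
    split_ifs with hD
    · exact hD ▸ homogeneousComponent_sqTotal_mem_hitSubmodule
        (homogeneousComponent_isHomogeneous d f) (by omega)
    · exact zero_mem _
  | zero => simp
  | add x y _ _ hx hy => simpa using add_mem hx hy
  | smul r x _ hx => simpa using Submodule.smul_mem _ r hx

theorem sqTotal_mem_restrictSupport_le_degree {g : MvPolynomial (Fin k) (ZMod 2)} {d : ℕ}
    (hg : g.IsHomogeneous d) :
    SqTotal k g ∈ restrictSupport (ZMod 2) {w | d ≤ w.degree} := by
  have hg' : g ∈ restrictSupport (ZMod 2) {v | v.degree = d} := fun v hv => by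
    show v.degree = d
    rw [Finsupp.degree_eq_weight_one]
    exact hg (mem_support_iff.1 hv)
  rw [restrictSupport_eq_span] at hg'
  refine (Submodule.span_le (p := (restrictSupport (ZMod 2) {w | d ≤ w.degree}).comap
    (SqTotal k).toLinearMap)).2 ?_ hg'
  rintro _ ⟨v, rfl : v.degree = d, rfl⟩
  have hrest := restrictSupport_mono (R := ZMod 2) (?_ : _ ⊆ {w | v.degree ≤ w.degree})
    (sqTotal_monomial_sub_mem v)
  · show SqTotal k (monomial v 1) ∈ restrictSupport (ZMod 2) {w | v.degree ≤ w.degree}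
    rw [← add_sub_cancel (monomial v 1) (SqTotal k (monomial v 1))]
    exact add_mem ((monomial_mem_restrictSupport _).2 (Or.inl (le_refl v.degree))) hrest
  · rintro _ ⟨c, -, -, rfl⟩
    simp

end Steenrod

-- No degree condition: `inadmissible_iff_mem_sup_lowerSpan` projects to the degree of `a`.
noncomputable def lowerSpan (k : ℕ) (a : Fin k →₀ ℕ) :
    Submodule (ZMod 2) (MvPolynomial (Fin k) (ZMod 2)) :=
  restrictSupport (ZMod 2) {v | monLT k v a}

section LowerSpan

variable {k : ℕ}

theorem lowerSpan_le_comap {a b : Fin k →₀ ℕ}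
    (f : MvPolynomial (Fin k) (ZMod 2) →ₗ[ZMod 2] MvPolynomial (Fin k) (ZMod 2))
    (φ : (Fin k →₀ ℕ) → Fin k →₀ ℕ) (hf : ∀ v, f (monomial v 1) = monomial (φ v) 1)
    (hφ : ∀ v, monLT k v a → monLT k (φ v) b) : lowerSpan k a ≤ (lowerSpan k b).comap f := by
  rw [lowerSpan, restrictSupport_eq_span, Submodule.span_le]
  rintro _ ⟨v, hv, rfl⟩
  simp [hf, lowerSpan, hφ v hv]

theorem monomial_mem_sup_lowerSpan {N : Submodule (ZMod 2) (MvPolynomial (Fin k) (ZMod 2))}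
    {a : Fin k →₀ ℕ} {t : ℕ} (y : Fin t → Fin k →₀ ℕ) (hy : ∀ j, monLT k (y j) a)
    (h : monomial a 1 + ∑ j, monomial (y j) 1 ∈ N) : monomial a 1 ∈ N ⊔ lowerSpan k a := by
  refine Submodule.mem_sup.2 ⟨_, h, -∑ j, monomial (y j) 1, neg_mem (Submodule.sum_mem _
    fun j _ => ?_), add_neg_cancel_right _ _⟩
  simp [lowerSpan, hy j]

theorem inadmissible_iff_mem_sup_lowerSpan {a : Fin k →₀ ℕ} :
    Inadmissible k a ↔ monomial a 1 ∈ hitSubmodule k ⊔ lowerSpan k a := by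
  refine ⟨fun ⟨t, y, _, hy, hhit⟩ => monomial_mem_sup_lowerSpan y hy hhit, fun H => ?_⟩
  obtain ⟨h, hh, l, hl, hsum⟩ := Submodule.mem_sup.1 H
  set l' := homogeneousComponent a.degree l
  have hsupp (v : Fin k →₀ ℕ) (hv : v ∈ l'.support) : monLT k v a ∧ v.degree = a.degree := by
    rw [support_homogeneousComponent, Finset.mem_filter] at hv
    exact ⟨hl hv.1, hv.2⟩
  have hl' : ∑ j, monomial (l'.support.equivFin.symm j : Fin k →₀ ℕ) (1 : ZMod 2) = l' := by
    rw [Equiv.sum_comp l'.support.equivFin.symm fun v => monomial (v : Fin k →₀ ℕ) (1 : ZMod 2),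
      Finset.sum_coe_sort l'.support fun v => monomial v (1 : ZMod 2), ← eq_sum_monomial_one]
  refine ⟨_, fun j => l'.support.equivFin.symm j, fun j => ?_,
    fun j => (hsupp _ (Finset.coe_mem _)).1, ?_⟩
  · simpa only [Finsupp.degree_eq_sum] using (hsupp _ (Finset.coe_mem _)).2
  · have hproj := congrArg (homogeneousComponent a.degree) hsum
    rw [map_add, homogeneousComponent_eq_self (isHomogeneous_monomial _ rfl)] at hproj
    show _ ∈ hitSubmodule k
    rw [hl', ← hproj, add_assoc, CharTwo.add_self_eq_zero, add_zero]
    exact homogeneousComponent_mem_hitSubmodule hh _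

end LowerSpan

section FrobeniusTwist

variable {k : ℕ}

theorem sqTotal_monomial_sub_mul_expand_mem_lowerSpan {a : Fin k →₀ ℕ} {r : ℕ}
    (ha : ∀ j, a j < 2 ^ r) (b : Fin k →₀ ℕ) (P : MvPolynomial (Fin k) (ZMod 2)) :
    (SqTotal k (monomial a 1) - monomial a 1) * expand (2 ^ r) P ∈
      lowerSpan k (a + 2 ^ r • b) := by
  have hP : P ∈ restrictSupport (ZMod 2) Set.univ := by simp
  have := Submodule.mul_mem_mul (sqTotal_monomial_sub_mem a)
    (expand_mem_restrictSupport hP (2 ^ r))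
  rw [← restrictSupport_add] at this
  refine restrictSupport_mono _ ?_ this
  rintro _ ⟨_, ⟨c, hc, hca, rfl⟩, _, ⟨p, -, rfl⟩, rfl⟩
  exact monLT_add_add_two_pow_smul ha hc hca p b

theorem monomial_mul_expand_homogeneousComponent_sqTotal_mem {a : Fin k →₀ ℕ} {r : ℕ}
    (ha : ∀ j, a j < 2 ^ r) (b : Fin k →₀ ℕ) {g : MvPolynomial (Fin k) (ZMod 2)} {e u : ℕ}
    (hg : g.IsHomogeneous e) (hu : 0 < u) :
    monomial a 1 * expand (2 ^ r) (homogeneousComponent (e + u) (SqTotal k g)) ∈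
      hitSubmodule k ⊔ lowerSpan k (a + 2 ^ r • b) := by
  set D := a.degree + 2 ^ r * (e + u)
  set R := SqTotal k (monomial a 1) - monomial a 1
  have hsq : SqTotal k (monomial a 1 * expand (2 ^ r) g) =
      monomial a 1 * expand (2 ^ r) (SqTotal k g) + R * expand (2 ^ r) (SqTotal k g) := by
    rw [map_mul, sqTotal_expand_two_pow]
    ring
  have hhit : homogeneousComponent D (SqTotal k (monomial a 1 * expand (2 ^ r) g)) ∈
      hitSubmodule k := by
    refine homogeneousComponent_sqTotal_mem_hitSubmodule
      ((isHomogeneous_monomial _ rfl).mul (hg.expand (by positivity))) ?_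
    have : 0 < 2 ^ r * u := by positivity
    simp only [D, mul_add]
    omega
  have hmain : homogeneousComponent D (monomial a 1 * expand (2 ^ r) (SqTotal k g)) =
      monomial a 1 * expand (2 ^ r) (homogeneousComponent (e + u) (SqTotal k g)) := by
    rw [homogeneousComponent_mul_of_isHomogeneous (isHomogeneous_monomial _ rfl),
      homogeneousComponent_expand (by positivity)]
  rw [← hmain, ← add_sub_cancel_right (homogeneousComponent D _)
    (homogeneousComponent D (R * expand (2 ^ r) (SqTotal k g))), ← map_add, ← hsq]
  exact sub_mem (Submodule.mem_sup_left hhit) (Submodule.mem_sup_right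
    (homogeneousComponent_mem_restrictSupport
      (sqTotal_monomial_sub_mul_expand_mem_lowerSpan ha b _) D))

theorem monomial_mul_expand_mem_of_mem_hitSubmodule {a : Fin k →₀ ℕ} {r : ℕ}
    (ha : ∀ j, a j < 2 ^ r) (b : Fin k →₀ ℕ) {h : MvPolynomial (Fin k) (ZMod 2)}
    (hh : h ∈ hitSubmodule k) :
    monomial a 1 * expand (2 ^ r) h ∈ hitSubmodule k ⊔ lowerSpan k (a + 2 ^ r • b) := by
  induction hh using Submodule.span_induction with
  | mem _ hx =>
    obtain ⟨u, f, hu, rfl⟩ := hx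
    rw [SqOp, map_sum, Finset.mul_sum]
    exact Submodule.sum_mem _ fun d _ =>
      monomial_mul_expand_homogeneousComponent_sqTotal_mem ha b
        (homogeneousComponent_isHomogeneous d f) hu
  | zero => simp
  | add x y _ _ hx hy => simpa [mul_add] using add_mem hx hy
  | smul c x _ hx => simpa using Submodule.smul_mem _ c hx

theorem inadmissible_add_two_pow_smul {a b : Fin k →₀ ℕ} {r : ℕ} (ha : ∀ j, a j < 2 ^ r)
    (hb : Inadmissible k b) : Inadmissible k (a + 2 ^ r • b) := by
  rw [inadmissible_iff_mem_sup_lowerSpan] at hb ⊢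
  obtain ⟨h, hh, l, hl, hsum⟩ := Submodule.mem_sup.1 hb
  have hmon (v : Fin k →₀ ℕ) :
      monomial a 1 * expand (2 ^ r) (monomial v 1) = monomial (a + 2 ^ r • v) (1 : ZMod 2) := by
    simp
  rw [← hmon, ← hsum, map_add, mul_add]
  refine add_mem (monomial_mul_expand_mem_of_mem_hitSubmodule ha b hh)
    (Submodule.mem_sup_right (lowerSpan_le_comap
      (LinearMap.mulLeft (ZMod 2) (monomial a 1) ∘ₗ (expand (2 ^ r)).toLinearMap) _ hmon
      (fun v hv => monLT_add_two_pow_smul ha hv) hl))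

end FrobeniusTwist

noncomputable def hitSubmoduleBelow (k s : ℕ) :
    Submodule (ZMod 2) (MvPolynomial (Fin k) (ZMod 2)) :=
  Submodule.span (ZMod 2) {g | ∃ u f, 1 ≤ u ∧ u < 2 ^ s ∧ g = SqOp k u f}

section StrictInadmissibility

variable {k : ℕ}

theorem hitSubmoduleBelow_mono {s s' : ℕ} (h : s' ≤ s) :
    hitSubmoduleBelow k s' ≤ hitSubmoduleBelow k s :=
  Submodule.span_mono fun _ ⟨u, f, hu, hus, hg⟩ =>
    ⟨u, f, hu, hus.trans_le (Nat.pow_le_pow_right two_pos h), hg⟩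

-- Encodes `Sq^j (y^(2^s)) = 0` for `0 < j < 2^s`: the rest of `Sq (y^(2^s))` has degree
-- at least `|y^(2^s)| + 2^s`, too high to reach the degree `d + u + |y^(2^s)|` component.
theorem homogeneousComponent_sqTotal_mul_monomial {g : MvPolynomial (Fin k) (ZMod 2)}
    {d u s : ℕ} (hg : g.IsHomogeneous d) (hu : u < 2 ^ s) (c : Fin k →₀ ℕ) :
    homogeneousComponent (d + u) (SqTotal k g) * monomial (2 ^ s • c) 1 =
      homogeneousComponent (2 ^ s * c.degree + (d + u))
        (SqTotal k (g * monomial (2 ^ s • c) 1)) := by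
  have hY : monomial (2 ^ s • c) (1 : ZMod 2) = expand (2 ^ s) (monomial c 1) := by simp
  have hR : SqTotal k (monomial c 1) - monomial c 1 ∈
      restrictSupport (ZMod 2) {w | c.degree + 1 ≤ w.degree} := by
    refine restrictSupport_mono _ ?_ (sqTotal_monomial_sub_mem c)
    rintro _ ⟨c', hc', -, rfl⟩
    have := (Finsupp.degree_eq_zero_iff c').not.2 hc'
    simp only [Set.mem_ofPred_eq, map_add]
    omega
  have hhigh := Submodule.mul_mem_mul (sqTotal_mem_restrictSupport_le_degree hg)
    (expand_mem_restrictSupport hR (2 ^ s))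
  rw [← restrictSupport_add] at hhigh
  have hsq : SqTotal k (g * monomial (2 ^ s • c) 1) = monomial (2 ^ s • c) 1 * SqTotal k g +
      SqTotal k g * expand (2 ^ s) (SqTotal k (monomial c 1) - monomial c 1) := by
    rw [map_mul, hY, sqTotal_expand_two_pow, map_sub]
    ring
  have hzero : homogeneousComponent (2 ^ s * c.degree + (d + u))
      (SqTotal k g * expand (2 ^ s) (SqTotal k (monomial c 1) - monomial c 1)) = 0 := by
    refine homogeneousComponent_eq_zero' _ _ fun w hw => ?_
    obtain ⟨w₁, hw₁, _, ⟨w₂, hw₂, rfl⟩, rfl⟩ := hhigh hw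
    simp only [Set.mem_ofPred_eq] at hw₁ hw₂
    have : 2 ^ s * (c.degree + 1) ≤ 2 ^ s * w₂.degree := Nat.mul_le_mul_left _ hw₂
    simp only [map_add, map_nsmul, smul_eq_mul]
    nlinarith
  rw [hsq, map_add, hzero, add_zero, homogeneousComponent_mul_of_isHomogeneous
      (isHomogeneous_monomial (1 : ZMod 2) (by simp : (2 ^ s • c).degree = 2 ^ s * c.degree)),
    mul_comm]

theorem mul_monomial_mem_hitSubmodule {s : ℕ} {h : MvPolynomial (Fin k) (ZMod 2)}
    (hh : h ∈ hitSubmoduleBelow k s) (c : Fin k →₀ ℕ) :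
    h * monomial (2 ^ s • c) 1 ∈ hitSubmodule k := by
  induction hh using Submodule.span_induction with
  | mem _ hx =>
    obtain ⟨u, f, hu, hus, rfl⟩ := hx
    rw [SqOp, Finset.sum_mul]
    refine Submodule.sum_mem _ fun d _ => ?_
    rw [homogeneousComponent_sqTotal_mul_monomial (homogeneousComponent_isHomogeneous d f) hus]
    refine homogeneousComponent_sqTotal_mem_hitSubmodule
      ((homogeneousComponent_isHomogeneous d f).mul (isHomogeneous_monomial (1 : ZMod 2)
        (by simp : (2 ^ s • c).degree = 2 ^ s * c.degree))) ?_
    omega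
  | zero => simp
  | add x y _ _ hx hy => simpa [add_mul] using add_mem hx hy
  | smul r x _ hx => simpa using Submodule.smul_mem _ r hx

theorem inadmissible_add_two_pow_smul_of_strictlyInadmissible {b : Fin k →₀ ℕ} {s : ℕ}
    (hb : ∀ i, s ≤ i → wvec k b i = 0) (hstrict : StrictlyInadmissible k b) (c : Fin k →₀ ℕ) :
    Inadmissible k (b + 2 ^ s • c) := by
  obtain ⟨s', -, hs', -, t, y, -, hy, hmem⟩ := hstrict
  have hle : s' ≤ s := by
    by_contra! h
    exact hs' (hb _ (by omega))
  obtain ⟨h, hh, l, hl, hsum⟩ :=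
    Submodule.mem_sup.1 (monomial_mem_sup_lowerSpan (N := hitSubmoduleBelow k s') y hy hmem)
  have hmon (v : Fin k →₀ ℕ) :
      monomial v 1 * monomial (2 ^ s • c) 1 = monomial (v + 2 ^ s • c) (1 : ZMod 2) := by
    simp
  rw [inadmissible_iff_mem_sup_lowerSpan, ← hmon, ← hsum, add_mul]
  exact add_mem
    (Submodule.mem_sup_left (mul_monomial_mem_hitSubmodule (hitSubmoduleBelow_mono hle hh) c))
    (Submodule.mem_sup_right (lowerSpan_le_comap (LinearMap.mulRight (ZMod 2) _) _ hmon
      (fun v hv => monLT_add_two_pow_smul_right hb hv c) hl))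

end StrictInadmissibility

theorem stmt16_general (k : ℕ) (a b c : Fin k →₀ ℕ) (r s : ℕ)
    (hx : ∀ i, r ≤ i → wvec k a i = 0)
    (hw2 : ∀ i, s ≤ i → wvec k b i = 0) :
    (Inadmissible k b → Inadmissible k (a + 2 ^ r • b)) ∧
    (StrictlyInadmissible k b →
      Inadmissible k (a + 2 ^ r • b + 2 ^ (r + s) • c)) := by
  have ha := lt_two_pow_of_wvec_eq_zero hx
  refine ⟨inadmissible_add_two_pow_smul ha, fun hb => ?_⟩
  have := inadmissible_add_two_pow_smul ha
    (inadmissible_add_two_pow_smul_of_strictlyInadmissible hw2 hb c)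
  rwa [smul_add, smul_smul, ← pow_add, ← add_assoc] at this

/-- Theorem 2.9 (Kameko, Sum): let `x, y, w` be monomials in `P_k` (given by exponent
vectors `a, c, b`) with `ω_i(x) = 0` for `i > r > 0`, `ω_s(w) ≠ 0`, `ω_i(w) = 0` for
`i > s > 0`.
(i) If `w` is inadmissible then so is `x · w^{2^r}`.
(ii) If `w` is strictly inadmissible then `x · w^{2^r} · y^{2^{r+s}}` is inadmissible. -/
theorem stmt16 (k : ℕ) (a b c : Fin k →₀ ℕ) (r s : ℕ) (hr : 0 < r) (hs : 0 < s)
    (hx : ∀ i, r ≤ i → wvec k a i = 0)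
    (hw1 : wvec k b (s - 1) ≠ 0)
    (hw2 : ∀ i, s ≤ i → wvec k b i = 0) :
    (Inadmissible k b → Inadmissible k (a + 2 ^ r • b)) ∧
    (StrictlyInadmissible k b →
      Inadmissible k (a + 2 ^ r • b + 2 ^ (r + s) • c)) :=
  stmt16_general k a b c r s hx hw2
end
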